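/- Consider problem (D): minimize δ*_{𝔅_n}(Z) + ½⟨W, QW⟩ subject to Z + QW + G = 0 and W ∈ Range(Q). Then the optimal solution sets of (P) and (D) are nonempty and compact, and (D) has a unique optimal solution (Z*, W*) ∈ ℝ^{n×n} × Range(Q). -/

import Mathlib

open Filter Topology
open scoped RealInnerProductSpace

/-- The space `ℝ^{n×n}` of square matrices endowed with the Frobenius (Euclidean)
inner product, realized as a Euclidean space indexed by pairs. -/
abbrev MatSp (n : ℕ) := EuclideanSpace ℝ (Fin n × Fin n)

/-- The Birkhoff polytope `𝔅ₙ` of doubly stochastic matrices. -/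
def Birkhoff (n : ℕ) : Set (MatSp n) :=
  {X | (∀ i, ∑ j, X (i, j) = 1) ∧ (∀ j, ∑ i, X (i, j) = 1) ∧ ∀ q, 0 ≤ X q}

/-- The support function `δ*_{𝔅ₙ}(Z) = max_{X ∈ 𝔅ₙ} ⟨X, Z⟩` of the Birkhoff polytope. -/
noncomputable def suppB (n : ℕ) (Z : MatSp n) : ℝ :=
  sSup ((fun X => ⟪X, Z⟫) '' Birkhoff n)

/-- The primal objective of problem (P): `f(X) = ½⟨X, QX⟩ + ⟨G, X⟩`. -/
noncomputable def objP {n : ℕ} (Q : MatSp n →ₗ[ℝ] MatSp n) (G X : MatSp n) : ℝ :=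
  (1 / 2) * ⟪X, Q X⟫ + ⟪G, X⟫

/-- The feasible set of the dual problem (D): `Z + QW + G = 0`, `W ∈ Range(Q)`. -/
def feasD {n : ℕ} (Q : MatSp n →ₗ[ℝ] MatSp n) (G : MatSp n) :
    Set (MatSp n × MatSp n) :=
  {zw | zw.1 + Q zw.2 + G = 0 ∧ zw.2 ∈ LinearMap.range Q}

/-- The dual objective `g(Z, W) = δ*_{𝔅ₙ}(Z) + ½⟨W, QW⟩`. -/
noncomputable def objD {n : ℕ} (Q : MatSp n →ₗ[ℝ] MatSp n) (zw : MatSp n × MatSp n) : ℝ :=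
  suppB n zw.1 + (1 / 2) * ⟪zw.2, Q zw.2⟫

/-- The optimal solution set of problem (P). -/
noncomputable def solP {n : ℕ} (Q : MatSp n →ₗ[ℝ] MatSp n) (G : MatSp n) : Set (MatSp n) :=
  {X ∈ Birkhoff n | ∀ Y ∈ Birkhoff n, objP Q G X ≤ objP Q G Y}

/-- The optimal solution set of problem (D). -/
noncomputable def solD {n : ℕ} (Q : MatSp n →ₗ[ℝ] MatSp n) (G : MatSp n) :
    Set (MatSp n × MatSp n) :=
  {zw ∈ feasD Q G | ∀ zw' ∈ feasD Q G, objD Q zw ≤ objD Q zw'}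

/-- The augmented Lagrangian
`L_σ(Z, W; X) = δ*_{𝔅ₙ}(Z) + ½⟨W, QW⟩ − ⟨X, Z + QW + G⟩ + (σ/2)‖Z + QW + G‖²`. -/
noncomputable def augL {n : ℕ} (Q : MatSp n →ₗ[ℝ] MatSp n) (G : MatSp n) (σ : ℝ)
    (Z W X : MatSp n) : ℝ :=
  suppB n Z + (1 / 2) * ⟪W, Q W⟫ - ⟪X, Z + Q W + G⟫ + (σ / 2) * ‖Z + Q W + G‖ ^ 2

lemma birkhoff_nonempty (n : ℕ) : (Birkhoff n).Nonempty := by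
  rcases Nat.eq_zero_or_pos n with h | h
  · subst h
    exact ⟨0, fun i => i.elim0, fun j => j.elim0, fun q => q.1.elim0⟩
  · refine ⟨(WithLp.toLp 2 (fun _ => (n : ℝ)⁻¹) : MatSp n), fun i => ?_, fun j => ?_, fun q => ?_⟩
    · simp [Finset.sum_const, Finset.card_univ, mul_inv_cancel₀ (by positivity : (n:ℝ) ≠ 0)]
    · simp [Finset.sum_const, Finset.card_univ, mul_inv_cancel₀ (by positivity : (n:ℝ) ≠ 0)]
    · show (0:ℝ) ≤ (n:ℝ)⁻¹; positivity

lemma birkhoff_mem_le_one {n : ℕ} {X : MatSp n} (hX : X ∈ Birkhoff n) (q : Fin n × Fin n) :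
    X q ≤ 1 := by
  obtain ⟨h1, h2, h3⟩ := hX
  calc X q = X (q.1, q.2) := by rw [Prod.mk.eta]
    _ ≤ ∑ j, X (q.1, j) := Finset.single_le_sum (f := fun j => X (q.1, j)) (fun j _ => h3 (q.1, j)) (Finset.mem_univ q.2)
    _ = 1 := h1 q.1

lemma birkhoff_isClosed (n : ℕ) : IsClosed (Birkhoff n) := by
  have hc : ∀ q : Fin n × Fin n, Continuous fun X : MatSp n => X q :=
    fun q => (EuclideanSpace.proj q).continuous
  have h1 : IsClosed {X : MatSp n | ∀ i, ∑ j, X (i, j) = 1} := by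
    rw [Set.setOf_forall]
    exact isClosed_iInter fun i =>
      isClosed_eq (continuous_finset_sum _ fun j _ => hc (i, j)) continuous_const
  have h2 : IsClosed {X : MatSp n | ∀ j, ∑ i, X (i, j) = 1} := by
    rw [Set.setOf_forall]
    exact isClosed_iInter fun j =>
      isClosed_eq (continuous_finset_sum _ fun i _ => hc (i, j)) continuous_const
  have h3 : IsClosed {X : MatSp n | ∀ q, 0 ≤ X q} := by
    rw [Set.setOf_forall]
    exact isClosed_iInter fun q => isClosed_le continuous_const (hc q)
  have : Birkhoff n = {X : MatSp n | ∀ i, ∑ j, X (i, j) = 1} ∩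
      ({X : MatSp n | ∀ j, ∑ i, X (i, j) = 1} ∩ {X : MatSp n | ∀ q, 0 ≤ X q}) := by
    ext X; simp [Birkhoff, Set.mem_inter_iff, and_assoc]
  rw [this]
  exact h1.inter (h2.inter h3)

lemma birkhoff_isCompact (n : ℕ) : IsCompact (Birkhoff n) := by
  apply Metric.isCompact_of_isClosed_isBounded (birkhoff_isClosed n)
  rw [Metric.isBounded_iff_subset_closedBall 0]
  refine ⟨(n : ℝ), fun X hX => ?_⟩
  rw [Metric.mem_closedBall, dist_zero_right]
  have h1 : ‖X‖ = Real.sqrt (∑ q : Fin n × Fin n, ‖X q‖ ^ 2) := EuclideanSpace.norm_eq X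
  rw [h1]
  have h2 : (∑ q : Fin n × Fin n, ‖X q‖ ^ 2) ≤ (n : ℝ) ^ 2 := by
    calc (∑ q : Fin n × Fin n, ‖X q‖ ^ 2) ≤ ∑ q : Fin n × Fin n, 1 := by
          refine Finset.sum_le_sum fun q _ => ?_
          have := hX.2.2 q
          have := birkhoff_mem_le_one hX q
          rw [Real.norm_eq_abs, abs_of_nonneg ‹0 ≤ X q›]
          nlinarith
      _ = (n : ℝ) ^ 2 := by simp [Finset.card_univ]; ring
  calc Real.sqrt (∑ q : Fin n × Fin n, ‖X q‖ ^ 2) ≤ Real.sqrt ((n : ℝ) ^ 2) :=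
        Real.sqrt_le_sqrt h2
    _ = (n : ℝ) := Real.sqrt_sq (by positivity)

lemma le_suppB {n : ℕ} {X : MatSp n} (hX : X ∈ Birkhoff n) (Z : MatSp n) :
    ⟪X, Z⟫ ≤ suppB n Z := by
  have hbdd : BddAbove ((fun X => ⟪X, Z⟫) '' Birkhoff n) :=
    ((birkhoff_isCompact n).image (continuous_id.inner continuous_const)).bddAbove
  exact le_csSup hbdd (Set.mem_image_of_mem _ hX)

lemma suppB_le {n : ℕ} (Z : MatSp n) {a : ℝ} (h : ∀ X ∈ Birkhoff n, ⟪X, Z⟫ ≤ a) :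
    suppB n Z ≤ a :=
  csSup_le ((birkhoff_nonempty n).image _) (by rintro _ ⟨X, hX, rfl⟩; exact h X hX)

lemma birkhoff_seg {n : ℕ} {X Y : MatSp n} (hX : X ∈ Birkhoff n) (hY : Y ∈ Birkhoff n)
    {t : ℝ} (ht0 : 0 ≤ t) (ht1 : t ≤ 1) : X + t • (Y - X) ∈ Birkhoff n := by
  obtain ⟨hX1, hX2, hX3⟩ := hX
  obtain ⟨hY1, hY2, hY3⟩ := hY
  refine ⟨fun i => ?_, fun j => ?_, fun q => ?_⟩
  · have : ∀ j, (X + t • (Y - X)) (i, j) = X (i, j) + t * (Y (i, j) - X (i, j)) := by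
      intro j; simp [PiLp.add_apply, PiLp.smul_apply, PiLp.sub_apply, smul_eq_mul]
    simp only [this, Finset.sum_add_distrib, ← Finset.mul_sum, Finset.sum_sub_distrib,
      hX1 i, hY1 i]
    ring
  · have : ∀ i, (X + t • (Y - X)) (i, j) = X (i, j) + t * (Y (i, j) - X (i, j)) := by
      intro i; simp [PiLp.add_apply, PiLp.smul_apply, PiLp.sub_apply, smul_eq_mul]
    simp only [this, Finset.sum_add_distrib, ← Finset.mul_sum, Finset.sum_sub_distrib,
      hX2 j, hY2 j]
    ring
  · have : (X + t • (Y - X)) q = X q + t * (Y q - X q) := by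
      simp [PiLp.add_apply, PiLp.smul_apply, PiLp.sub_apply, smul_eq_mul]
    rw [this]
    nlinarith [hX3 q, hY3 q]

lemma psd_kernel {n : ℕ} (Q : MatSp n →ₗ[ℝ] MatSp n)
    (hsa : ∀ X Y : MatSp n, ⟪Q X, Y⟫ = ⟪X, Q Y⟫)
    (hpsd : ∀ X : MatSp n, 0 ≤ ⟪X, Q X⟫)
    {D : MatSp n} (h : ⟪D, Q D⟫ = 0) : Q D = 0 := by
  set a : ℝ := ⟪Q D, Q D⟫ with ha
  set c : ℝ := ⟪Q D, Q (Q D)⟫ with hc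
  have hc0 : 0 ≤ c := hpsd _
  have ha0 : 0 ≤ a := real_inner_self_nonneg
  have key : ∀ t : ℝ, 0 ≤ 2 * t * a + t ^ 2 * c := by
    intro t
    have h0 := hpsd (D + t • Q D)
    have hexp : ⟪D + t • Q D, Q (D + t • Q D)⟫ = ⟪D, Q D⟫ + 2 * t * a + t ^ 2 * c := by
      have h1 : ⟪D, Q (Q D)⟫ = a := by rw [← hsa]
      simp only [map_add, map_smul, inner_add_left, inner_add_right,
        real_inner_smul_left, real_inner_smul_right, h1, ← ha, ← hc]
      ring
    rw [hexp, h] at h0; linarith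
  have hc1 : (0:ℝ) < c + 1 := by linarith
  have h2 := key (-(a / (c + 1)))
  have h4 : (2 * (-(a / (c + 1))) * a + (-(a / (c + 1))) ^ 2 * c) * (c + 1) ^ 2
      = -(a ^ 2 * (c + 2)) := by field_simp; ring
  have h3 : 0 ≤ (2 * (-(a / (c + 1))) * a + (-(a / (c + 1))) ^ 2 * c) * (c + 1) ^ 2 :=
    mul_nonneg h2 (sq_nonneg _)
  rw [h4] at h3
  have ha' : a = 0 := by nlinarith
  have := @inner_self_eq_zero ℝ _ _ _ _ (Q D)
  rw [ha] at ha'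
  exact this.mp ha'

/-- the optimal solution sets of (P) and (D) are nonempty and compact
and (D) has a unique optimal solution. -/
theorem stmt_14 (n : ℕ) (Q : MatSp n →ₗ[ℝ] MatSp n)
    (hsa : ∀ X Y : MatSp n, ⟪Q X, Y⟫ = ⟪X, Q Y⟫)
    (hpsd : ∀ X : MatSp n, 0 ≤ ⟪X, Q X⟫)
    (G : MatSp n) :
    (solP Q G).Nonempty ∧ IsCompact (solP Q G) ∧
    (solD Q G).Nonempty ∧ IsCompact (solD Q G) ∧
    ∃! zw : MatSp n × MatSp n, zw ∈ solD Q G := by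
  classical
  have hQc : Continuous Q := Q.continuous_of_finiteDimensional
  have hobjc : Continuous (objP Q G) := by
    unfold objP
    exact (continuous_const.mul (continuous_id.inner hQc)).add
      (continuous_const.inner continuous_id)
  obtain ⟨Xs, hXsB, hXsmin⟩ :=
    (birkhoff_isCompact n).exists_isMinOn (birkhoff_nonempty n) hobjc.continuousOn
  have hmin : ∀ Y ∈ Birkhoff n, objP Q G Xs ≤ objP Q G Y := fun Y hY => hXsmin hY
  -- compactness of solP
  have hsolPc : IsCompact (solP Q G) := by
    have hcl : IsClosed (solP Q G) := by
      have heq : solP Q G = Birkhoff n ∩ ⋂ Y ∈ Birkhoff n, {X | objP Q G X ≤ objP Q G Y} := by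
        ext X; simp [solP, Set.mem_iInter]
      rw [heq]
      exact (birkhoff_isClosed n).inter
        (isClosed_biInter fun Y _ => isClosed_le hobjc continuous_const)
    exact (birkhoff_isCompact n).of_isClosed_subset hcl (fun X hX => hX.1)
  -- first-order optimality condition at Xs
  have hfo : ∀ Y ∈ Birkhoff n, 0 ≤ ⟪Y - Xs, Q Xs⟫ + ⟪G, Y - Xs⟫ := by
    intro Y hY
    have hexp : ∀ t : ℝ, objP Q G (Xs + t • (Y - Xs)) =
        objP Q G Xs + t * (⟪Y - Xs, Q Xs⟫ + ⟪G, Y - Xs⟫)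
          + t ^ 2 * (⟪Y - Xs, Q (Y - Xs)⟫ / 2) := by
      intro t
      have hcross : ⟪Xs, Q (Y - Xs)⟫ = ⟪Y - Xs, Q Xs⟫ :=
        (hsa Xs (Y - Xs)).symm.trans (real_inner_comm _ _)
      simp only [objP, map_add, map_smul, inner_add_left, inner_add_right,
        real_inner_smul_left, real_inner_smul_right, hcross]
      ring
    set c : ℝ := ⟪Y - Xs, Q Xs⟫ + ⟪G, Y - Xs⟫ with hc
    set d : ℝ := ⟪Y - Xs, Q (Y - Xs)⟫ with hd
    have hd0 : 0 ≤ d := hpsd _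
    have hkey : ∀ t : ℝ, 0 < t → t ≤ 1 → 0 ≤ t * c + t ^ 2 * (d / 2) := by
      intro t ht0 ht1
      have hmem := birkhoff_seg hXsB hY (le_of_lt ht0) ht1
      have h := hmin _ hmem
      rw [hexp t] at h
      linarith
    by_contra hcneg
    push_neg at hcneg
    have hd1 : (0:ℝ) < d + 1 := by linarith
    set t0 : ℝ := min 1 (-c / (d + 1)) with ht0def
    have ht0pos : 0 < t0 := lt_min one_pos (div_pos (by linarith) hd1)
    have ht0le1 : t0 ≤ 1 := min_le_left _ _
    have h6 : t0 * (d + 1) ≤ -c := (le_div_iff₀ hd1).mp (min_le_right _ _)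
    have h7 := hkey t0 ht0pos ht0le1
    nlinarith [mul_pos ht0pos ht0pos, mul_le_mul_of_nonneg_left h6 (le_of_lt ht0pos),
      mul_pos ht0pos (neg_pos.mpr hcneg)]
  -- dual optimal candidate
  set K := LinearMap.range Q with hK
  haveI : CompleteSpace K := FiniteDimensional.complete ℝ K
  set Ws : MatSp n := (K.orthogonalProjection Xs : MatSp n) with hWs
  set Zs : MatSp n := -(Q Xs + G) with hZs
  have hWsK : Ws ∈ K := SetLike.coe_mem _
  have hQWs : Q Ws = Q Xs := by
    have hmem : Xs - Ws ∈ Kᗮ := Submodule.sub_starProjection_mem_orthogonal (K := K) Xs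
    have hzero : Q (Xs - Ws) = 0 := by
      have h1 : ⟪Q (Xs - Ws), Q (Xs - Ws)⟫ = 0 := by
        rw [hsa]
        have hm : Q (Q (Xs - Ws)) ∈ K := ⟨Q (Xs - Ws), rfl⟩
        have h2 := (Submodule.mem_orthogonal K (Xs - Ws)).mp hmem _ hm
        rw [real_inner_comm]; exact h2
      exact (@inner_self_eq_zero ℝ _ _ _ _ (Q (Xs - Ws))).mp h1
    have h3 : Q Xs - Q Ws = 0 := by rw [← map_sub]; exact hzero
    exact (sub_eq_zero.mp h3).symm
  have hfeasS : (Zs, Ws) ∈ feasD Q G := by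
    refine ⟨?_, hWsK⟩
    show Zs + Q Ws + G = 0
    rw [hQWs, hZs]; abel
  have hmax : ∀ Y ∈ Birkhoff n, ⟪Y, Zs⟫ ≤ ⟪Xs, Zs⟫ := by
    intro Y hY
    have h := hfo Y hY
    have e1 : ⟪Y - Xs, Q Xs⟫ = ⟪Y, Q Xs⟫ - ⟪Xs, Q Xs⟫ := inner_sub_left _ _ _
    have e2 : ⟪G, Y - Xs⟫ = ⟪G, Y⟫ - ⟪G, Xs⟫ := inner_sub_right _ _ _
    have e3 : ⟪Y, Zs⟫ = -(⟪Y, Q Xs⟫ + ⟪Y, G⟫) := by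
      rw [hZs]; simp [inner_neg_right, inner_add_right]
    have e4 : ⟪Xs, Zs⟫ = -(⟪Xs, Q Xs⟫ + ⟪Xs, G⟫) := by
      rw [hZs]; simp [inner_neg_right, inner_add_right]
    have e5 : ⟪G, Y⟫ = ⟪Y, G⟫ := real_inner_comm _ _
    have e6 : ⟪G, Xs⟫ = ⟪Xs, G⟫ := real_inner_comm _ _
    linarith
  have hsuppZs : suppB n Zs = ⟪Xs, Zs⟫ :=
    le_antisymm (suppB_le _ hmax) (le_suppB hXsB Zs)
  have hkeyD : ∀ zw ∈ feasD Q G,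
      objD Q (Zs, Ws) + (1 / 2) * ⟪zw.2 - Ws, Q (zw.2 - Ws)⟫ ≤ objD Q zw := by
    rintro ⟨Z, W⟩ ⟨hfe, -⟩
    have hZ : Z = -(Q W + G) := by
      have h : Z + (Q W + G) = 0 := by rw [← add_assoc]; exact hfe
      exact eq_neg_of_add_eq_zero_left h
    have c1 : ⟪W, Q Ws⟫ = ⟪Xs, Q W⟫ := by
      rw [hQWs, ← hsa W Xs, real_inner_comm]
    have c2 : ⟪Ws, Q W⟫ = ⟪Xs, Q W⟫ := by
      rw [real_inner_comm, hsa W Ws]; exact c1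
    have c3 : ⟪Ws, Q Ws⟫ = ⟪Xs, Q Xs⟫ := by
      rw [hQWs, real_inner_comm, hsa Xs Ws, hQWs]
    have e4 : ⟪W - Ws, Q (W - Ws)⟫ = ⟪W, Q W⟫ - 2 * ⟪Xs, Q W⟫ + ⟪Xs, Q Xs⟫ := by
      rw [map_sub, inner_sub_left, inner_sub_right, inner_sub_right, c1, c2, c3]
      ring
    have e1 : ⟪Xs, Z⟫ = -(⟪Xs, Q W⟫ + ⟪Xs, G⟫) := by
      rw [hZ]; simp [inner_neg_right, inner_add_right]
    have e2 : ⟪Xs, Zs⟫ = -(⟪Xs, Q Xs⟫ + ⟪Xs, G⟫) := by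
      rw [hZs]; simp [inner_neg_right, inner_add_right]
    have hle := le_suppB hXsB Z
    show suppB n Zs + (1 / 2) * ⟪Ws, Q Ws⟫ + (1 / 2) * ⟪W - Ws, Q (W - Ws)⟫ ≤
      suppB n Z + (1 / 2) * ⟪W, Q W⟫
    rw [hsuppZs]
    linarith
  have hsolD : solD Q G = {(Zs, Ws)} := by
    ext zw
    constructor
    · rintro ⟨hfe, hopt⟩
      obtain ⟨Z, W⟩ := zw
      have h1 := hopt (Zs, Ws) hfeasS
      have h2 := hkeyD (Z, W) hfe
      have h0 : 0 ≤ ⟪W - Ws, Q (W - Ws)⟫ := hpsd _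
      have hz : ⟪W - Ws, Q (W - Ws)⟫ = 0 := by
        simp only at h2
        nlinarith [h1, h2]
      have hQD : Q (W - Ws) = 0 := psd_kernel Q hsa hpsd hz
      have hDK : W - Ws ∈ K := Submodule.sub_mem K hfe.2 hWsK
      obtain ⟨u, hu⟩ := hDK
      have hself := hsa u (W - Ws)
      rw [hu] at hself
      rw [hQD, inner_zero_right] at hself
      have hD0 : W - Ws = 0 := (@inner_self_eq_zero ℝ _ _ _ _ (W - Ws)).mp hself
      have hWeq : W = Ws := by rwa [sub_eq_zero] at hD0
      have hZeq : Z = Zs := by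
        have hfe1 : Z + Q W + G = 0 := hfe.1
        rw [hWeq, hQWs] at hfe1
        rw [hZs]
        have h : Z + (Q Xs + G) = 0 := by rw [← add_assoc]; exact hfe1
        exact eq_neg_of_add_eq_zero_left h
      simp [hZeq, hWeq]
    · rintro rfl
      exact ⟨hfeasS, fun zw' hzw' =>
        le_trans (le_add_of_nonneg_right (mul_nonneg (by norm_num) (hpsd _)))
          (hkeyD zw' hzw')⟩
  refine ⟨⟨Xs, hXsB, hmin⟩, hsolPc, ?_, ?_, ?_⟩
  · rw [hsolD]; exact ⟨_, rfl⟩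
  · rw [hsolD]; exact isCompact_singleton
  · refine ⟨(Zs, Ws), ?_, fun zw hzw => ?_⟩
    · rw [hsolD]; rfl
    · rw [hsolD] at hzw; exact hzw
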